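/- arXiv:1603.03508 — 2 statements merged into one kernel-verified Lean document; each statement's English description precedes it below -/
import Mathlib

section
/- In the trisection configuration, with F = (c₁, 0) the foot of the perpendicular from C = (c₁, 1) to the x-axis, E the midpoint of CD where |CD| = 2 and d₂ > 1, O = (0,0) with OE ⊥ CD: the unsigned angle ∠DOF (between ray OD and ray OF) equals 3·∠COF. -/
/-!
Since `E` is the midpoint of `CD` and `OE ⊥ CD`, `O` lies on the perpendicular bisector of `CD`,
so `|OD| = |OC| = s` with `s = √(c₁² + 1)`. Intersecting the circle of radius `s` about `O` with
the circle of radius `2` about `C` and discarding the root `D = (c₁, -1)` gives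
`d₁ = c₁ (c₁² - 3) / (c₁² + 1)`, i.e. `d₁ / s = 4 (c₁ / s)³ - 3 (c₁ / s)`. As `cos ∠COF = c₁ / s`
and `cos ∠DOF = d₁ / s`, this is the triple-angle formula for the cosine; `d₂ > 1` forces
`c₁ > 1`, so `∠COF < π / 3` and `3 ∠COF` stays in the range `[0, π]` of `arccos`.
-/

open EuclideanGeometry RealInnerProductSpace

noncomputable def pt (x y : ℝ) : EuclideanSpace ℝ (Fin 2) := WithLp.toLp 2 ![x, y]

open Real

theorem arccos_four_mul_pow_three_sub_three_mul {x : ℝ} (hx : 1 / 2 ≤ x) (hx₁ : x ≤ 1) :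
    arccos (4 * x ^ 3 - 3 * x) = 3 * arccos x := by
  have hle : arccos x ≤ π / 3 :=
    calc arccos x ≤ arccos (1 / 2) := arccos_le_arccos hx
      _ = π / 3 := by rw [← cos_pi_div_three, arccos_cos (by positivity) (by linarith [pi_pos])]
  refine arccos_eq_of_eq_cos (mul_nonneg zero_le_three (arccos_nonneg x)) (by linarith) ?_
  rw [cos_three_mul, cos_arccos (by linarith) hx₁]

theorem dist_pt_pt (a b c d : ℝ) : dist (pt a b) (pt c d) = √((a - c) ^ 2 + (b - d) ^ 2) := by
  simp [pt, EuclideanSpace.dist_eq, Real.dist_eq, sq_abs]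

theorem angle_pt_origin_pt {c : ℝ} (a b : ℝ) (hc : 0 < c) :
    ∠ (pt a b) (pt 0 0) (pt c 0) = arccos (a / √(a ^ 2 + b ^ 2)) := by
  simp only [angle, InnerProductGeometry.angle, pt, vsub_eq_sub, PiLp.inner_apply, PiLp.sub_apply,
    RCLike.inner_apply, ringHom_apply, Fin.sum_univ_two, Matrix.cons_val_zero, sub_zero,
    Matrix.cons_val_one, Matrix.cons_val_fin_one, sub_self, zero_mul, add_zero,
    EuclideanSpace.norm_eq, norm_eq_abs, sq_abs, ne_eq, OfNat.ofNat_ne_zero, not_false_eq_true,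
    zero_pow, sqrt_sq hc.le]
  congr 1
  field_simp

theorem carpenters_square_coords {c d₁ d₂ : ℝ} (hO : d₁ ^ 2 + d₂ ^ 2 = c ^ 2 + 1)
    (hC : (c - d₁) ^ 2 + (1 - d₂) ^ 2 = 4) (hd₂ : 1 < d₂) :
    (c ^ 2 + 1) * d₁ = c * (c ^ 2 - 3) ∧ 1 < c ^ 2 := by
  have hline : c * d₁ + d₂ = c ^ 2 - 1 := by linear_combination (hO - hC) / 2
  have hne : d₁ ≠ c := by rintro rfl; linarith
  have hfac : (d₁ - c) * ((c ^ 2 + 1) * d₁ - c * (c ^ 2 - 3)) = 0 := by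
    linear_combination hO - (d₂ + c ^ 2 - 1 - c * d₁) * hline
  have hd₁ : (c ^ 2 + 1) * d₁ = c * (c ^ 2 - 3) :=
    sub_eq_zero.1 ((mul_eq_zero.1 hfac).resolve_left (sub_ne_zero.2 hne))
  have hd₂' : (c ^ 2 + 1) * d₂ = 3 * c ^ 2 - 1 := by
    linear_combination (c ^ 2 + 1) * hline - c * hd₁
  exact ⟨hd₁, by nlinarith⟩

/-- In the trisection configuration, with `F = (c₁, 0)` the foot of the perpendicular from
`C = (c₁, 1)` (with `c₁ > 0`) to the `x`-axis, `D = (d₁, d₂)` with `d₂ > 1` and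
`|CD| = 2`, `E` the midpoint of `CD`, and `OE ⊥ CD` where `O` is the origin, the unsigned
angle `∠ D O F` equals `3 ⬝ ∠ C O F`. -/
theorem carpenters_square_triple_angle (c₁ d₁ d₂ : ℝ) (hc₁ : 0 < c₁) (hd₂ : 1 < d₂)
    (O C D E Fpt : EuclideanSpace ℝ (Fin 2))
    (hO : O = pt 0 0) (hC : C = pt c₁ 1) (hD : D = pt d₁ d₂)
    (hCD : dist C D = 2) (hE : E = midpoint ℝ C D) (hF : Fpt = pt c₁ 0)
    (hperp : ⟪E - O, D - C⟫ = 0) :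
    ∠ D O Fpt = 3 * ∠ C O Fpt := by
  have hOC : dist O C = dist O D := by
    rw [← AffineSubspace.mem_perpBisector_iff_dist_eq,
      AffineSubspace.mem_perpBisector_iff_inner_eq_zero, vsub_eq_sub, vsub_eq_sub, ← hE,
      ← neg_sub, inner_neg_left, hperp, neg_zero]
  subst hO hC hD hF
  rw [dist_pt_pt, dist_pt_pt, sqrt_inj (by positivity) (by positivity)] at hOC
  rw [dist_pt_pt, sqrt_eq_iff_eq_sq (by positivity) zero_le_two] at hCD
  have hOD : d₁ ^ 2 + d₂ ^ 2 = c₁ ^ 2 + 1 := by linear_combination -hOC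
  obtain ⟨hd₁, hc⟩ := carpenters_square_coords (c := c₁) hOD (by linear_combination hCD) hd₂
  rw [angle_pt_origin_pt _ _ hc₁, angle_pt_origin_pt _ _ hc₁, one_pow, hOD]
  set s := √(c₁ ^ 2 + 1)
  have hs : 0 < s := by positivity
  have hs_sq : s ^ 2 = c₁ ^ 2 + 1 := sq_sqrt (by positivity)
  have hhalf : 1 / 2 ≤ c₁ / s := by rw [div_le_div_iff₀ two_pos hs]; nlinarith
  have hle : c₁ / s ≤ 1 := by rw [div_le_one hs]; nlinarith
  rw [← arccos_four_mul_pow_three_sub_three_mul hhalf hle]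
  congr 1
  field_simp
  linear_combination hd₁ + (d₁ + 3 * c₁) * hs_sq
end

section
/- Every angle θ ∈ (0, π) can be trisected using the carpenter's square curve: there exists a point D = (x, y) with x = r cos θ·t, y = r sin θ·t for some r > 0 (i.e., D on the open ray at angle θ) lying on the curve x²(3-y) = (y-2)²(y+1) with 1 < y < 3. -/
/-! The point of height `y` on the ray at angle `θ ∈ (0, π)` is `(y cot θ, y)`. On a line
`x = c y` the difference of the two sides of the curve's equation,
`(c y)² (3 - y) - (y - 2)² (y + 1)`, is `4 c² ≥ 0` at `y = 2` and `-4 < 0` at `y = 3`, so the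
intermediate value theorem gives a point of the curve on the ray with `2 ≤ y < 3`. -/

theorem exists_mem_Ico_curve_eq_on_line (c : ℝ) :
    ∃ y ∈ Set.Ico (2 : ℝ) 3, (c * y) ^ 2 * (3 - y) = (y - 2) ^ 2 * (y + 1) := by
  set f : ℝ → ℝ := fun y => (c * y) ^ 2 * (3 - y) - (y - 2) ^ 2 * (y + 1)
  have hf : ContinuousOn f (Set.Icc 2 3) := by fun_prop
  have hzero : (0 : ℝ) ∈ Set.Ioc (f 3) (f 2) := by
    constructor <;> norm_num [f]; positivity
  obtain ⟨y, hy, hfy⟩ := intermediate_value_Ico' (by norm_num) hf hzero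
  exact ⟨y, hy, sub_eq_zero.mp hfy⟩

/-- Every angle `θ ∈ (0, π)` can be trisected using the carpenter's square curve: the open
ray from the origin at angle `θ` meets the portion of the curve with `1 < y < 3`. -/
theorem carpenters_square_curve_meets_every_ray (θ : ℝ)
    (hθ₁ : 0 < θ) (hθ₂ : θ < Real.pi) :
    ∃ r : ℝ, 0 < r ∧ ∃ x y : ℝ, x = r * Real.cos θ ∧ y = r * Real.sin θ ∧
      x ^ 2 * (3 - y) = (y - 2) ^ 2 * (y + 1) ∧ 1 < y ∧ y < 3 := by
  have hsin : 0 < Real.sin θ := Real.sin_pos_of_pos_of_lt_pi hθ₁ hθ₂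
  obtain ⟨y, ⟨hy₂, hy₃⟩, hcurve⟩ :=
    exists_mem_Ico_curve_eq_on_line (Real.cos θ / Real.sin θ)
  refine ⟨y / Real.sin θ, by positivity, _, y, ?_, ?_, hcurve, by linarith, hy₃⟩
  · ring
  · rw [div_mul_cancel₀ y hsin.ne']
end
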